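/- arXiv:2505.06216 — 3 statements merged into one kernel-verified Lean document; each statement's English description precedes it below -/
import Mathlib

section
/- Let d ≥ 1 be an integer and let P_R ∈ ℝ[x] be a polynomial of degree at most d such that: (1) P_R has parity (d mod 2); (2) |P_R(x)| ≤ 1 for all x ∈ [−1,+1]. Then there exists a polynomial P ∈ ℂ[x] of degree at most d whose real part equals P_R (i.e. Re P(x) = P_R(x) for all real x) and which satisfies: P has parity (d mod 2); |P(x)| ≤ 1 for all x ∈ [−1,+1]; |P(x)| ≥ 1 for all real x with |x| ≥ 1; and, if d is even, P(ix)·P*(ix) ≥ 1 for all x ∈ ℝ. -/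
/-!
Since `P_R` has parity `d`, `1 - P_R²` is even and nonnegative on `[-1, 1]`, so it is `a(x²)` with
`a ≥ 0` on `[0, 1]` and `deg a ≤ d`. By Lukács' theorem `a = p² + t(1-t)q²` (`d` even) or
`a = t p² + (1-t) q²` (`d` odd). Such representations are multiplicative, and a polynomial that is
nonnegative on `[0, 1]` splits off a factor that has one: `X - r` with `r ≤ 0`, `r - X` with
`r ≥ 1`, `(X - r)²` for an interior (necessarily double) root, or a quadratic `|X - z|²` for a
nonreal root `z`; induction on the degree proves Lukács' theorem. Substituting `t = x²` gives
`1 - P_R² = B² + (1 - x²) R²` with `B` of parity `d` and `R` of the opposite parity. Then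
`P = P_R + i B` has `|P(x)|² = 1 - (1 - x²) R(x)²` for real `x`, and for even `d`,
`P(ix) P*(ix) = 1 - (1 + x²) R(ix)² ≥ 1` because `R` is odd, so `R(ix)` is purely imaginary.
-/
open Polynomial Set
open scoped ComplexOrder

namespace RealQSP

lemma natDegree_le_of_natDegree_X_mul_le {R : Type*} [Semiring R] [Nontrivial R] {p : R[X]}
    {n : ℕ} (h : (X * p).natDegree ≤ n + 1) : p.natDegree ≤ n := by
  rcases eq_or_ne p 0 with rfl | hp
  · simp
  · rw [natDegree_X_mul hp] at h
    omega

lemma natDegree_one_sub_X_le {R : Type*} [Ring R] : (1 - X : R[X]).natDegree ≤ 1 :=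
  (natDegree_sub_le _ _).trans (max_le (by simp) natDegree_X_le)

-- `(X * q).natDegree ≤ m` encodes `deg q < m` while allowing `q = 0`.
def IsLukacsEven (m : ℕ) (a : ℝ[X]) : Prop :=
  ∃ p q : ℝ[X], a = p ^ 2 + X * (1 - X) * q ^ 2 ∧ p.natDegree ≤ m ∧ (X * q).natDegree ≤ m

def IsLukacsOdd (m : ℕ) (a : ℝ[X]) : Prop :=
  ∃ p q : ℝ[X], a = X * p ^ 2 + (1 - X) * q ^ 2 ∧ p.natDegree ≤ m ∧ q.natDegree ≤ m

theorem IsLukacsEven.mul {m k : ℕ} {a b : ℝ[X]} (ha : IsLukacsEven m a) (hb : IsLukacsEven k b) :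
    IsLukacsEven (m + k) (a * b) := by
  obtain ⟨p₁, q₁, rfl, hp₁, hq₁⟩ := ha
  obtain ⟨p₂, q₂, rfl, hp₂, hq₂⟩ := hb
  refine ⟨p₁ * p₂ + X * (1 - X) * (q₁ * q₂), p₁ * q₂ - q₁ * p₂, by ring,
    natDegree_add_le_of_degree_le (natDegree_mul_le_of_le hp₁ hp₂) ?_, ?_⟩
  · refine natDegree_le_of_natDegree_X_mul_le ?_
    rw [show X * (X * (1 - X) * (q₁ * q₂)) = (1 - X) * (X * q₁) * (X * q₂) by ring]
    exact (natDegree_mul_le_of_le (natDegree_mul_le_of_le natDegree_one_sub_X_le hq₁) hq₂).trans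
      (by omega)
  · rw [show X * (p₁ * q₂ - q₁ * p₂) = p₁ * (X * q₂) - (X * q₁) * p₂ by ring]
    exact (natDegree_sub_le_of_le (natDegree_mul_le_of_le hp₁ hq₂)
      (natDegree_mul_le_of_le hq₁ hp₂)).trans (by omega)

theorem IsLukacsOdd.mul {m k : ℕ} {a b : ℝ[X]} (ha : IsLukacsOdd m a) (hb : IsLukacsOdd k b) :
    IsLukacsEven (m + k + 1) (a * b) := by
  obtain ⟨p₁, q₁, rfl, hp₁, hq₁⟩ := ha
  obtain ⟨p₂, q₂, rfl, hp₂, hq₂⟩ := hb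
  refine ⟨X * (p₁ * p₂) + (1 - X) * (q₁ * q₂), p₁ * q₂ - q₁ * p₂, by ring,
    natDegree_add_le_of_degree_le ?_ ?_, ?_⟩
  · exact (natDegree_mul_le_of_le natDegree_X_le (natDegree_mul_le_of_le hp₁ hp₂)).trans (by omega)
  · exact (natDegree_mul_le_of_le natDegree_one_sub_X_le (natDegree_mul_le_of_le hq₁ hq₂)).trans
      (by omega)
  · exact (natDegree_mul_le_of_le natDegree_X_le (natDegree_sub_le_of_le
      (natDegree_mul_le_of_le hp₁ hq₂) (natDegree_mul_le_of_le hq₁ hp₂))).trans (by omega)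

theorem IsLukacsEven.mul_isLukacsOdd {m k : ℕ} {a b : ℝ[X]} (ha : IsLukacsEven m a)
    (hb : IsLukacsOdd k b) : IsLukacsOdd (m + k) (a * b) := by
  obtain ⟨p₁, q₁, rfl, hp₁, hq₁⟩ := ha
  obtain ⟨p₂, q₂, rfl, hp₂, hq₂⟩ := hb
  refine ⟨p₁ * p₂ + (1 - X) * (q₁ * q₂), p₁ * q₂ - X * q₁ * p₂, by ring,
    natDegree_add_le_of_degree_le (natDegree_mul_le_of_le hp₁ hp₂) ?_, ?_⟩
  · refine natDegree_le_of_natDegree_X_mul_le ?_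
    rw [show X * ((1 - X) * (q₁ * q₂)) = (1 - X) * (X * q₁) * q₂ by ring]
    exact (natDegree_mul_le_of_le (natDegree_mul_le_of_le natDegree_one_sub_X_le hq₁) hq₂).trans
      (by omega)
  · exact (natDegree_sub_le_of_le (natDegree_mul_le_of_le hp₁ hq₂)
      (natDegree_mul_le_of_le hq₁ hp₂)).trans (by omega)

lemma isLukacsEven_of_natDegree_eq_zero {a : ℝ[X]} (ha : a.natDegree = 0) (h0 : 0 ≤ a.eval 0)
    (m : ℕ) : IsLukacsEven m a := by
  rw [eq_C_of_natDegree_eq_zero ha] at h0 ⊢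
  rw [eval_C] at h0
  exact ⟨C √(a.coeff 0), 0, by rw [← C_pow, Real.sq_sqrt h0]; ring, by simp, by simp⟩

lemma isLukacsOdd_of_natDegree_eq_zero {a : ℝ[X]} (ha : a.natDegree = 0) (h0 : 0 ≤ a.eval 0)
    (m : ℕ) : IsLukacsOdd m a := by
  rw [eq_C_of_natDegree_eq_zero ha] at h0 ⊢
  rw [eval_C] at h0
  exact ⟨C √(a.coeff 0), C √(a.coeff 0), by rw [← C_pow, Real.sq_sqrt h0]; ring, by simp, by simp⟩

lemma isLukacsOdd_zero_of_natDegree_le_one {a : ℝ[X]} (ha : a.natDegree ≤ 1) (h0 : 0 ≤ a.eval 0)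
    (h1 : 0 ≤ a.eval 1) : IsLukacsOdd 0 a := by
  refine ⟨C √(a.eval 1), C √(a.eval 0), ?_, by simp, by simp⟩
  rw [← C_pow, ← C_pow, Real.sq_sqrt h0, Real.sq_sqrt h1, eq_X_add_C_of_natDegree_le_one ha]
  simp only [eval_add, eval_mul, eval_C, eval_X, mul_one, mul_zero, zero_add, C_add]
  ring

lemma isLukacsEven_one_X_sub_C_sq (r : ℝ) : IsLukacsEven 1 ((X - C r) ^ 2) :=
  ⟨X - C r, 0, by ring, natDegree_X_sub_C_le r, by simp⟩

lemma isLukacsEven_one_quadratic (z : ℂ) :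
    IsLukacsEven 1 (X ^ 2 - C (2 * z.re) * X + C (‖z‖ ^ 2)) := by
  set α := -(‖z‖ + ‖z - 1‖)
  have hα : 1 ≤ α ^ 2 := by
    have := norm_le_norm_add_norm_sub z 1
    simp only [norm_one] at this
    nlinarith [norm_nonneg z, norm_nonneg (z - 1)]
  have hγ : √(α ^ 2 - 1) ^ 2 = α ^ 2 - 1 := Real.sq_sqrt (by linarith)
  -- `p = α X + ‖z‖` must satisfy `p(0)² = ‖z‖²` and `p(1)² = ‖z - 1‖²`, and `α² ≥ 1` leaves room
  -- for the `X (1 - X)` term; the coefficient of `X` then matches because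
  -- `α² + 2α‖z‖ = ‖z - 1‖² - ‖z‖² = 1 - 2 Re z`.
  have hαz : α ^ 2 + 2 * α * ‖z‖ = 1 - 2 * z.re := by
    have h1 := Complex.sq_norm z
    have h2 := Complex.sq_norm (z - 1)
    simp only [Complex.normSq_apply, Complex.sub_re, Complex.sub_im, Complex.one_re,
      Complex.one_im] at h1 h2
    nlinarith
  refine ⟨C α * X + C ‖z‖, C √(α ^ 2 - 1), ?_, by compute_degree, by compute_degree⟩
  have e1 : C (√(α ^ 2 - 1)) ^ 2 = C α ^ 2 - 1 := by rw [← C_pow, hγ]; simp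
  have e2 := congrArg C hαz
  simp only [map_add, map_mul, map_pow, map_sub, map_one, map_ofNat] at e2
  simp only [C_mul, C_pow, map_ofNat]
  linear_combination (X ^ 2 - X) * e1 - X * e2

lemma nonneg_on_Icc_of_forall_ne {f : ℝ → ℝ} (hf : Continuous f) {a b : ℝ} (hab : a ≠ b) (r : ℝ)
    (h : ∀ t ∈ Icc a b, t ≠ r → 0 ≤ f t) : ∀ t ∈ Icc a b, 0 ≤ f t := by
  have hdense : Icc a b ⊆ closure (Ioo a b ∩ {r}ᶜ) := by
    rw [← closure_Ioo hab]
    exact closure_minimal ((dense_compl_singleton r).open_subset_closure_inter isOpen_Ioo)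
      isClosed_closure
  exact fun t ht => closure_minimal (fun s hs => h s (Ioo_subset_Icc_self hs.1) hs.2)
    (isClosed_le continuous_const hf) (hdense ht)

lemma X_sub_C_sq_dvd_of_isLocalMin {p : ℝ[X]} {r : ℝ} (hr : p.IsRoot r)
    (hmin : IsLocalMin (fun x => p.eval x) r) : (X - C r) ^ 2 ∣ p := by
  rcases eq_or_ne p 0 with rfl | hp
  · exact dvd_zero _
  rw [← le_rootMultiplicity_iff hp]
  refine (one_lt_rootMultiplicity_iff_isRoot hp).mpr ⟨hr, ?_⟩
  simpa [IsRoot, Polynomial.deriv] using hmin.deriv_eq_zero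

def IsLukacsFactor (f a : ℝ[X]) : Prop :=
  f ∣ a ∧ (∃ r : ℝ, ∀ t ∈ Icc (0 : ℝ) 1, t ≠ r → 0 < f.eval t) ∧
    (IsLukacsOdd 0 f ∧ f.natDegree = 1 ∨ IsLukacsEven 1 f ∧ f.natDegree = 2)

lemma exists_isLukacsFactor_of_isRoot {a : ℝ[X]} (hnn : ∀ t ∈ Icc (0 : ℝ) 1, 0 ≤ a.eval t)
    {r : ℝ} (hr : a.IsRoot r) : ∃ f, IsLukacsFactor f a := by
  rcases le_or_gt r 0 with hr0 | hr0
  · refine ⟨X - C r, dvd_iff_isRoot.mpr hr, ⟨r, fun t ht htr => ?_⟩,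
      Or.inl ⟨isLukacsOdd_zero_of_natDegree_le_one (natDegree_X_sub_C_le r) ?_ ?_,
        natDegree_X_sub_C r⟩⟩ <;> simp only [eval_sub, eval_X, eval_C]
    · exact sub_pos.mpr (lt_of_le_of_ne (hr0.trans ht.1) htr.symm)
    all_goals linarith
  rcases le_or_gt 1 r with hr1 | hr1
  · have hneg : C r - X = -(X - C r) := (neg_sub _ _).symm
    refine ⟨C r - X, hneg ▸ neg_dvd.mpr (dvd_iff_isRoot.mpr hr), ⟨r, fun t ht htr => ?_⟩,
      Or.inl ⟨isLukacsOdd_zero_of_natDegree_le_one ?_ ?_ ?_, ?_⟩⟩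
    · simp only [eval_sub, eval_X, eval_C]
      exact sub_pos.mpr (lt_of_le_of_ne (ht.2.trans hr1) htr)
    · rw [hneg, natDegree_neg]; exact natDegree_X_sub_C_le r
    any_goals simp only [eval_sub, eval_X, eval_C]; linarith
    rw [hneg, natDegree_neg, natDegree_X_sub_C]
  · refine ⟨(X - C r) ^ 2, X_sub_C_sq_dvd_of_isLocalMin hr ?_, ⟨r, fun t _ htr => ?_⟩,
      Or.inr ⟨isLukacsEven_one_X_sub_C_sq r, by rw [natDegree_pow, natDegree_X_sub_C]⟩⟩
    · filter_upwards [Ioo_mem_nhds hr0 hr1] with t ht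
      simpa [hr.eq_zero] using hnn t (Ioo_subset_Icc_self ht)
    · have := sub_ne_zero.mpr htr
      simp only [eval_pow, eval_sub, eval_X, eval_C]
      positivity

lemma exists_isLukacsFactor_of_forall_not_isRoot {a : ℝ[X]} (ha : 0 < a.natDegree)
    (hroot : ∀ r : ℝ, ¬ a.IsRoot r) : ∃ f, IsLukacsFactor f a := by
  obtain ⟨z, hz⟩ := IsAlgClosed.exists_aeval_eq_zero ℂ a (natDegree_pos_iff_degree_pos.mp ha).ne'
  have him : z.im ≠ 0 := by
    intro him
    apply hroot z.re
    rw [← Complex.re_add_im z, him, Complex.ofReal_zero, zero_mul, add_zero] at hz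
    exact Complex.ofReal_eq_zero.mp
      ((aeval_algebraMap_apply_eq_algebraMap_eval (A := ℂ) z.re a).symm.trans hz)
  refine ⟨_, quadratic_dvd_of_aeval_eq_zero_im_ne_zero a hz him, ⟨0, fun t _ _ => ?_⟩,
    Or.inr ⟨isLukacsEven_one_quadratic z, by compute_degree!⟩⟩
  have hsq : ‖z‖ ^ 2 = z.re ^ 2 + z.im ^ 2 := by rw [Complex.sq_norm, Complex.normSq_apply]; ring
  have := pow_pos (abs_pos.mpr him) 2
  simp only [eval_add, eval_sub, eval_mul, eval_pow, eval_X, eval_C, hsq]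
  nlinarith [sq_nonneg (t - z.re), sq_abs z.im]

lemma exists_lukacs_factor {a : ℝ[X]} (ha : 0 < a.natDegree)
    (hnn : ∀ t ∈ Icc (0 : ℝ) 1, 0 ≤ a.eval t) :
    ∃ f b : ℝ[X], a = f * b ∧ (∀ t ∈ Icc (0 : ℝ) 1, 0 ≤ b.eval t) ∧
      (IsLukacsOdd 0 f ∧ b.natDegree + 1 = a.natDegree ∨
        IsLukacsEven 1 f ∧ b.natDegree + 2 = a.natDegree) := by
  obtain ⟨f, ⟨b, rfl⟩, ⟨r, hf⟩, hform⟩ : ∃ f, IsLukacsFactor f a := by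
    by_cases hroot : ∃ r, a.IsRoot r
    · exact exists_isLukacsFactor_of_isRoot hnn hroot.choose_spec
    · exact exists_isLukacsFactor_of_forall_not_isRoot ha (not_exists.mp hroot)
  have hfb : f * b ≠ 0 := ne_zero_of_natDegree_gt ha
  have hdeg := natDegree_mul (left_ne_zero_of_mul hfb) (right_ne_zero_of_mul hfb)
  refine ⟨f, b, rfl, nonneg_on_Icc_of_forall_ne b.continuous zero_ne_one r fun t ht htr => ?_, ?_⟩
  · exact nonneg_of_mul_nonneg_right (by simpa using hnn t ht) (hf t ht htr)
  · rcases hform with ⟨hf, h1⟩ | ⟨hf, h2⟩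
    exacts [Or.inl ⟨hf, by omega⟩, Or.inr ⟨hf, by omega⟩]

theorem isLukacsEven_and_isLukacsOdd_of_nonneg (m : ℕ) :
    (∀ a : ℝ[X], a.natDegree ≤ 2 * m → (∀ t ∈ Icc (0 : ℝ) 1, 0 ≤ a.eval t) →
      IsLukacsEven m a) ∧
    (∀ a : ℝ[X], a.natDegree ≤ 2 * m + 1 → (∀ t ∈ Icc (0 : ℝ) 1, 0 ≤ a.eval t) →
      IsLukacsOdd m a) := by
  have h0 : (0 : ℝ) ∈ Icc (0 : ℝ) 1 := left_mem_Icc.mpr zero_le_one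
  induction m with
  | zero =>
    exact ⟨fun a ha hnn => isLukacsEven_of_natDegree_eq_zero (by omega) (hnn 0 h0) 0,
      fun a ha hnn => isLukacsOdd_zero_of_natDegree_le_one ha (hnn 0 h0)
        (hnn 1 (right_mem_Icc.mpr zero_le_one))⟩
  | succ m ih =>
    have heven : ∀ a : ℝ[X], a.natDegree ≤ 2 * (m + 1) →
        (∀ t ∈ Icc (0 : ℝ) 1, 0 ≤ a.eval t) → IsLukacsEven (m + 1) a := by
      intro a ha hnn
      rcases Nat.eq_zero_or_pos a.natDegree with hdeg | hdeg
      · exact isLukacsEven_of_natDegree_eq_zero hdeg (hnn 0 h0) _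
      obtain ⟨f, b, rfl, hb, ⟨hf, hfb⟩ | ⟨hf, hfb⟩⟩ := exists_lukacs_factor hdeg hnn
      · simpa using hf.mul (ih.2 b (by omega) hb)
      · simpa [add_comm] using hf.mul (ih.1 b (by omega) hb)
    refine ⟨heven, fun a ha hnn => ?_⟩
    rcases Nat.eq_zero_or_pos a.natDegree with hdeg | hdeg
    · exact isLukacsOdd_of_natDegree_eq_zero hdeg (hnn 0 h0) _
    obtain ⟨f, b, rfl, hb, ⟨hf, hfb⟩ | ⟨hf, hfb⟩⟩ := exists_lukacs_factor hdeg hnn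
    · simpa [mul_comm] using (heven b (by omega) hb).mul_isLukacsOdd hf
    · simpa [add_comm] using hf.mul_isLukacsOdd (ih.2 b (by omega) hb)

lemma coeff_eq_zero_of_comp_neg_X_eq {R : Type*} [CommRing R] [NoZeroDivisors R] [CharZero R]
    {A : R[X]} (h : A.comp (-X) = A) {n : ℕ} (hn : Odd n) : A.coeff n = 0 := by
  have := congrArg (coeff · n) h
  simp only [show (-X : R[X]) = C (-1) * X by simp, comp_C_mul_X_coeff, hn.neg_one_pow,
    mul_neg_one] at this
  exact self_eq_neg.mp this.symm

lemma exists_expand_two_eq_of_comp_neg_X_eq {R : Type*} [CommRing R] [NoZeroDivisors R]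
    [CharZero R] {A : R[X]} (h : A.comp (-X) = A) : ∃ a : R[X], expand R 2 a = A := by
  refine ⟨contract 2 A, ext fun n => ?_⟩
  rw [coeff_expand two_pos, coeff_contract two_ne_zero]
  split_ifs with hn
  · rw [Nat.div_mul_cancel hn]
  · exact (coeff_eq_zero_of_comp_neg_X_eq h (Nat.odd_iff.mpr (by omega))).symm

lemma expand_two_comp_neg_X {R : Type*} [CommRing R] (p : R[X]) :
    (expand R 2 p).comp (-X) = expand R 2 p := by
  rw [expand_eq_comp_X_pow, comp_assoc, pow_comp, X_comp, neg_sq]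

theorem exists_eq_sq_add_one_sub_X_sq_mul_sq {A : ℝ[X]} {d : ℕ} (hdeg : A.natDegree ≤ 2 * d)
    (heven : A.comp (-X) = A) (hnn : ∀ x ∈ Icc (-1 : ℝ) 1, 0 ≤ A.eval x) :
    ∃ B R : ℝ[X], A = B ^ 2 + (1 - X ^ 2) * R ^ 2 ∧ B.natDegree ≤ d ∧
      B.comp (-X) = (-1) ^ d * B ∧ R.comp (-X) = (-1) ^ (d + 1) * R := by
  obtain ⟨a, rfl⟩ := exists_expand_two_eq_of_comp_neg_X_eq heven
  rw [natDegree_expand] at hdeg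
  have ha : ∀ t ∈ Icc (0 : ℝ) 1, 0 ≤ a.eval t := fun t ht => by
    simpa [expand_eval, Real.sq_sqrt ht.1] using
      hnn √t ⟨by linarith [Real.sqrt_nonneg t], Real.sqrt_le_one.mpr ht.2⟩
  rcases Nat.even_or_odd' d with ⟨m, rfl | rfl⟩
  · obtain ⟨p, q, rfl, hp, -⟩ := (isLukacsEven_and_isLukacsOdd_of_nonneg m).1 a (by omega) ha
    refine ⟨expand ℝ 2 p, X * expand ℝ 2 q, by simp; ring, by rw [natDegree_expand]; omega,
      by simp [expand_two_comp_neg_X, pow_mul], by simp [expand_two_comp_neg_X, pow_succ, pow_mul]⟩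
  · obtain ⟨p, q, rfl, hp, -⟩ := (isLukacsEven_and_isLukacsOdd_of_nonneg m).2 a (by omega) ha
    refine ⟨X * expand ℝ 2 p, expand ℝ 2 q, by simp; ring, ?_,
      by simp [expand_two_comp_neg_X, pow_succ, pow_mul],
      by simp [expand_two_comp_neg_X, pow_succ, pow_mul]⟩
    exact (natDegree_mul_le_of_le natDegree_X_le (natDegree_expand 2 p).le).trans (by omega)

theorem exists_qsp_complement {P : ℝ[X]} {d : ℕ} (hdeg : P.natDegree ≤ d)
    (hpar : P.comp (-X) = (-1) ^ d * P) (hbound : ∀ x ∈ Icc (-1 : ℝ) 1, |P.eval x| ≤ 1) :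
    ∃ B R : ℝ[X], P ^ 2 + B ^ 2 = 1 - (1 - X ^ 2) * R ^ 2 ∧ B.natDegree ≤ d ∧
      B.comp (-X) = (-1) ^ d * B ∧ R.comp (-X) = (-1) ^ (d + 1) * R := by
  have hdeg' : (1 - P ^ 2).natDegree ≤ 2 * d :=
    (natDegree_sub_le _ _).trans (max_le (by simp) (natDegree_pow_le_of_le 2 hdeg))
  have heven : (1 - P ^ 2).comp (-X) = 1 - P ^ 2 := by
    rw [sub_comp, one_comp, pow_comp, hpar, mul_pow, ← pow_mul, pow_mul', neg_one_sq, one_pow,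
      one_mul]
  have hnn : ∀ x ∈ Icc (-1 : ℝ) 1, 0 ≤ (1 - P ^ 2).eval x := fun x hx => by
    simpa [sq_le_one_iff_abs_le_one] using hbound x hx
  obtain ⟨B, R, hA, hB⟩ := exists_eq_sq_add_one_sub_X_sq_mul_sq hdeg' heven hnn
  exact ⟨B, R, by linear_combination -hA, hB⟩

lemma sq_aeval_I_mul_nonpos {R : ℝ[X]} (hR : R.comp (-X) = -R) (x : ℝ) :
    aeval (Complex.I * x) R ^ 2 ≤ 0 := by
  set w := aeval (Complex.I * x) R
  have hconj : starRingEnd ℂ w = -w := calc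
    starRingEnd ℂ w = aeval (-(Complex.I * x)) R := by rw [← aeval_conj]; simp
    _ = aeval (Complex.I * x) (R.comp (-X)) := by simp [aeval_comp]
    _ = -w := by rw [hR, map_neg]
  have hre : w.re = 0 := by
    have := congrArg Complex.re hconj
    simp only [Complex.conj_re, Complex.neg_re] at this
    linarith
  have hw : w ^ 2 = ((-(w.im ^ 2) : ℝ) : ℂ) := by
    apply Complex.ext <;> simp [sq, hre]
  rw [hw]
  exact_mod_cast neg_nonpos.mpr (sq_nonneg w.im)

noncomputable def ofReIm (A B : ℝ[X]) : ℂ[X] :=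
  A.map (algebraMap ℝ ℂ) + C Complex.I * B.map (algebraMap ℝ ℂ)

section ofReIm

variable {A B R : ℝ[X]}

lemma natDegree_ofReIm_le {d : ℕ} (hA : A.natDegree ≤ d) (hB : B.natDegree ≤ d) :
    (ofReIm A B).natDegree ≤ d :=
  natDegree_add_le_of_degree_le (natDegree_map_le.trans hA)
    ((natDegree_C_mul_le _ _).trans (natDegree_map_le.trans hB))

lemma eval_ofReIm_ofReal (x : ℝ) :
    (ofReIm A B).eval (x : ℂ) = ((A.eval x : ℝ) : ℂ) + ((B.eval x : ℝ) : ℂ) * Complex.I := by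
  simp [ofReIm, eval_map_algebraMap, mul_comm, ← Complex.coe_algebraMap,
    aeval_algebraMap_apply_eq_algebraMap_eval]

lemma sq_norm_eval_ofReIm (x : ℝ) :
    ‖(ofReIm A B).eval (x : ℂ)‖ ^ 2 = A.eval x ^ 2 + B.eval x ^ 2 := by
  rw [eval_ofReIm_ofReal, Complex.sq_norm, Complex.normSq_add_mul_I]

lemma ofReIm_comp_neg_X {n : ℕ} (hA : A.comp (-X) = (-1) ^ n * A)
    (hB : B.comp (-X) = (-1) ^ n * B) : (ofReIm A B).comp (-X) = (-1) ^ n * ofReIm A B := by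
  have hmap : ∀ p : ℝ[X], p.comp (-X) = (-1) ^ n * p →
      (p.map (algebraMap ℝ ℂ)).comp (-X) = (-1) ^ n * p.map (algebraMap ℝ ℂ) := fun p hp => by
    simpa [map_comp] using congrArg (map (algebraMap ℝ ℂ)) hp
  simp only [ofReIm, add_comp, mul_comp, C_comp, hmap A hA, hmap B hB]
  ring

lemma ofReIm_mul_map_conj :
    ofReIm A B * (ofReIm A B).map (starRingEnd ℂ) = (A ^ 2 + B ^ 2).map (algebraMap ℝ ℂ) := by
  have hconj : ∀ p : ℝ[X], (p.map (algebraMap ℝ ℂ)).map (starRingEnd ℂ) = p.map (algebraMap ℝ ℂ) :=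
    fun p => by rw [map_map]; congr 1; ext x; simp
  have hI : (C Complex.I) ^ 2 = -1 := by rw [← C_pow, Complex.I_sq, C_neg, C_1]
  simp only [ofReIm, Polynomial.map_add, Polynomial.map_mul, Polynomial.map_pow, map_C, hconj,
    Complex.conj_I, C_neg]
  linear_combination (-(B.map (algebraMap ℝ ℂ)) ^ 2) * hI

lemma norm_eval_ofReIm_le_one (hsum : A ^ 2 + B ^ 2 = 1 - (1 - X ^ 2) * R ^ 2) {x : ℝ}
    (hx : x ∈ Icc (-1 : ℝ) 1) : ‖(ofReIm A B).eval (x : ℂ)‖ ≤ 1 := by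
  rw [← sq_le_one_iff₀ (norm_nonneg _), sq_norm_eval_ofReIm]
  have h := congrArg (eval x) hsum
  simp only [eval_add, eval_sub, eval_mul, eval_pow, eval_one, eval_X] at h
  have : 0 ≤ 1 - x ^ 2 := by nlinarith [hx.1, hx.2]
  nlinarith [mul_nonneg this (sq_nonneg (R.eval x))]

lemma one_le_norm_eval_ofReIm (hsum : A ^ 2 + B ^ 2 = 1 - (1 - X ^ 2) * R ^ 2) {x : ℝ}
    (hx : 1 ≤ |x|) : 1 ≤ ‖(ofReIm A B).eval (x : ℂ)‖ := by
  rw [← one_le_sq_iff₀ (norm_nonneg _), sq_norm_eval_ofReIm]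
  have h := congrArg (eval x) hsum
  simp only [eval_add, eval_sub, eval_mul, eval_pow, eval_one, eval_X] at h
  have : 1 - x ^ 2 ≤ 0 := by nlinarith [sq_abs x]
  nlinarith [mul_nonpos_of_nonpos_of_nonneg this (sq_nonneg (R.eval x))]

lemma one_le_eval_ofReIm_mul_map_conj (hsum : A ^ 2 + B ^ 2 = 1 - (1 - X ^ 2) * R ^ 2)
    (hR : R.comp (-X) = -R) (x : ℝ) :
    1 ≤ (ofReIm A B).eval (Complex.I * x) *
      ((ofReIm A B).map (starRingEnd ℂ)).eval (Complex.I * x) := by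
  rw [← eval_mul, ofReIm_mul_map_conj, hsum, eval_map_algebraMap]
  simp only [map_sub, map_mul, map_pow, map_one, aeval_X, mul_pow, Complex.I_sq]
  rw [le_sub_self_iff]
  refine mul_nonpos_of_nonneg_of_nonpos ?_ (sq_aeval_I_mul_nonpos hR x)
  have : (1 - -1 * (x : ℂ) ^ 2) = ((1 + x ^ 2 : ℝ) : ℂ) := by push_cast; ring
  rw [this]
  exact Complex.zero_le_real.mpr (by positivity)

end ofReIm

end RealQSP

open RealQSP

theorem real_qsp_completion_general (d : ℕ) (PR : Polynomial ℝ)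
    (hdeg : PR.natDegree ≤ d)
    (hparity : ∀ x : ℝ, PR.eval (-x) = (-1) ^ d * PR.eval x)
    (hbound : ∀ x : ℝ, x ∈ Set.Icc (-1 : ℝ) 1 → |PR.eval x| ≤ 1) :
    ∃ P : Polynomial ℂ,
      P.natDegree ≤ d ∧
      (∀ x : ℝ, (P.eval (x : ℂ)).re = PR.eval x) ∧
      (∀ x : ℂ, P.eval (-x) = (-1) ^ d * P.eval x) ∧
      (∀ x : ℝ, x ∈ Set.Icc (-1 : ℝ) 1 → ‖P.eval (x : ℂ)‖ ≤ 1) ∧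
      (∀ x : ℝ, 1 ≤ |x| → 1 ≤ ‖P.eval (x : ℂ)‖) ∧
      (Even d → ∀ x : ℝ,
        (1 : ℂ) ≤ P.eval (Complex.I * (x : ℂ)) *
          (P.map (starRingEnd ℂ)).eval (Complex.I * (x : ℂ))) := by
  have hpar : PR.comp (-X) = (-1) ^ d * PR := Polynomial.funext fun x => by simp [hparity x]
  obtain ⟨B, R, hsum, hBdeg, hBpar, hRpar⟩ := exists_qsp_complement hdeg hpar hbound
  refine ⟨ofReIm PR B, natDegree_ofReIm_le hdeg hBdeg, fun x => by simp [eval_ofReIm_ofReal],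
    fun z => by simpa using congrArg (eval z) (ofReIm_comp_neg_X hpar hBpar),
    fun x => norm_eval_ofReIm_le_one hsum, fun x => one_le_norm_eval_ofReIm hsum,
    fun hd => one_le_eval_ofReIm_mul_map_conj hsum ?_⟩
  rw [hRpar, hd.add_one.neg_one_pow, neg_one_mul]

/-- Real quantum signal processing: any real polynomial of definite parity bounded by 1 on
`[-1,1]` can be completed to a complex polynomial satisfying the QSP conditions. -/
theorem real_qsp_completion (d : ℕ) (hd : 1 ≤ d) (PR : Polynomial ℝ)
    (hdeg : PR.natDegree ≤ d)
    (hparity : ∀ x : ℝ, PR.eval (-x) = (-1) ^ d * PR.eval x)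
    (hbound : ∀ x : ℝ, x ∈ Set.Icc (-1 : ℝ) 1 → |PR.eval x| ≤ 1) :
    ∃ P : Polynomial ℂ,
      P.natDegree ≤ d ∧
      (∀ x : ℝ, (P.eval (x : ℂ)).re = PR.eval x) ∧
      (∀ x : ℂ, P.eval (-x) = (-1) ^ d * P.eval x) ∧
      (∀ x : ℝ, x ∈ Set.Icc (-1 : ℝ) 1 → ‖P.eval (x : ℂ)‖ ≤ 1) ∧
      (∀ x : ℝ, 1 ≤ |x| → 1 ≤ ‖P.eval (x : ℂ)‖) ∧
      (Even d → ∀ x : ℝ,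
        (1 : ℂ) ≤ P.eval (Complex.I * (x : ℂ)) *
          (P.map (starRingEnd ℂ)).eval (Complex.I * (x : ℂ))) :=
  real_qsp_completion_general d PR hdeg hparity hbound
end

section
/- Let λ > 0 and let n be a nonnegative integer. Then sup_{x ∈ [−1,+1]} | p_{exp,λ,n}(x) | ≤ 1. -/
/-! Expanding `e^{λ cos θ}` in its power series gives `I_j(λ) = π⁻¹ ∑ₖ λᵏ/k! c(k, j)` with the
moments `c(k, j) = ∫₀^π cosᵏ θ cos (jθ) dθ`. The product-to-sum formula
`2 cos θ cos ((j+1)θ) = cos (jθ) + cos ((j+2)θ)` makes every `c(k, j)` nonnegative, and shows that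
`c(k, 0) + 2 ∑_{j ≤ n} c(k, j)` can only grow when `k` is lowered and `n` raised, down to its value `π`
at `k = 0`. Hence `I_j(λ) ≥ 0` and `I_0(λ) + 2 ∑_{j ≤ n} I_j(λ) ≤ e^λ`, and since `|T_j| ≤ 1` on
`[-1, 1]`, `|p_{exp,λ,n}(x)| ≤ e^{-λ} e^λ = 1`. -/

/-- The modified Bessel function of the first kind,
`I_j(λ) = (1/π) ∫_0^π e^{λ cos θ} cos(jθ) dθ`. -/
noncomputable def besselI (j : ℕ) (l : ℝ) : ℝ :=
  (1 / Real.pi) * ∫ θ in (0 : ℝ)..Real.pi, Real.exp (l * Real.cos θ) * Real.cos (j * θ)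

/-- The degree-`n` Chebyshev–Bessel polynomial approximation of `e^{-λ(x+1)}`:
`p_{exp,λ,n}(x) = e^{-λ}(I_0(λ) + 2 ∑_{j=1}^n I_j(λ) T_j(-x))`. -/
noncomputable def pExp (l : ℝ) (n : ℕ) (x : ℝ) : ℝ :=
  Real.exp (-l) * (besselI 0 l +
    2 * ∑ j ∈ Finset.Icc 1 n, besselI j l * (Polynomial.Chebyshev.T ℝ (j : ℤ)).eval (-x))

open Real intervalIntegral
open scoped Nat

noncomputable def cosMoment (k j : ℕ) : ℝ := ∫ θ in 0..π, cos θ ^ k * cos (j * θ)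

lemma intervalIntegrable_cos_pow_mul_cos (k j : ℕ) :
    IntervalIntegrable (fun θ => cos θ ^ k * cos (j * θ)) MeasureTheory.volume 0 π := by
  apply Continuous.intervalIntegrable
  fun_prop

lemma cosMoment_zero_left (j : ℕ) : cosMoment 0 j = if j = 0 then π else 0 := by
  split_ifs with hj
  · simp [cosMoment, hj]
  · have hj' : (j : ℝ) ≠ 0 := Nat.cast_ne_zero.mpr hj
    simp [cosMoment, integral_comp_mul_left (fun θ => cos θ) hj', sin_nat_mul_pi]

lemma cosMoment_succ_zero (k : ℕ) : cosMoment (k + 1) 0 = cosMoment k 1 := by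
  simp [cosMoment, pow_succ]

lemma two_mul_cosMoment_succ_succ (k j : ℕ) :
    2 * cosMoment (k + 1) (j + 1) = cosMoment k j + cosMoment k (j + 2) := by
  rw [cosMoment, cosMoment, cosMoment, ← integral_const_mul,
    ← integral_add (intervalIntegrable_cos_pow_mul_cos k j)
      (intervalIntegrable_cos_pow_mul_cos k (j + 2))]
  refine integral_congr fun θ _ => ?_
  have : cos (j * θ) + cos ((j + 2 : ℕ) * θ) = 2 * cos ((j + 1 : ℕ) * θ) * cos θ := by
    rw [cos_add_cos, ← cos_neg ((_ - _) / 2)]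
    push_cast
    ring_nf
  rw [← mul_add, this]
  ring

lemma cosMoment_nonneg (k j : ℕ) : 0 ≤ cosMoment k j := by
  induction k generalizing j with
  | zero => rw [cosMoment_zero_left]; split_ifs <;> positivity
  | succ k ih =>
    rcases j with _ | j
    · rw [cosMoment_succ_zero]; exact ih 1
    · linarith [two_mul_cosMoment_succ_succ k j, ih j, ih (j + 2)]

noncomputable def cosMomentSum (k n : ℕ) : ℝ :=
  cosMoment k 0 + 2 * ∑ j ∈ Finset.Icc 1 n, cosMoment k j

lemma cosMomentSum_succ_right (k n : ℕ) :
    cosMomentSum k (n + 1) = cosMomentSum k n + 2 * cosMoment k (n + 1) := by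
  rw [cosMomentSum, cosMomentSum, Finset.sum_Icc_succ_top (by omega)]
  ring

lemma cosMomentSum_succ_add (k n : ℕ) :
    cosMomentSum (k + 1) n + cosMoment k n + cosMoment k (n + 1) = cosMomentSum k (n + 1) := by
  induction n with
  | zero =>
    simp only [cosMomentSum, Finset.Icc_self, Finset.sum_singleton, Finset.Icc_eq_empty_of_lt,
      zero_lt_one, Finset.sum_empty, cosMoment_succ_zero]
    linarith [two_mul_cosMoment_succ_succ k 0]
  | succ n ih =>
    rw [cosMomentSum_succ_right (k + 1), cosMomentSum_succ_right k (n + 1)]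
    linarith [two_mul_cosMoment_succ_succ k n]

lemma cosMomentSum_le_pi (k n : ℕ) : cosMomentSum k n ≤ π := by
  induction k generalizing n with
  | zero => simp [cosMomentSum, cosMoment_zero_left]
  | succ k ih =>
    linarith [cosMomentSum_succ_add k n, cosMoment_nonneg k n, cosMoment_nonneg k (n + 1),
      ih (n + 1)]

lemma hasSum_besselI (j : ℕ) (l : ℝ) :
    HasSum (fun k => l ^ k / k ! * (cosMoment k j / π)) (besselI j l) := by
  let term (k : ℕ) : C(ℝ, ℝ) := ⟨fun θ => (l * cos θ) ^ k / k ! * cos (j * θ), by fun_prop⟩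
  have hterm_norm (k : ℕ) :
      ‖(term k).restrict (⟨Set.uIcc 0 π, isCompact_uIcc⟩ : TopologicalSpace.Compacts ℝ)‖
        ≤ |l| ^ k / k ! := by
    refine (ContinuousMap.norm_le _ (by positivity)).mpr fun θ => ?_
    simp only [ContinuousMap.restrict_apply, term, ContinuousMap.coe_mk, norm_mul, norm_div,
      norm_pow, Real.norm_eq_abs, Nat.abs_cast]
    calc (|l| * |cos θ|) ^ k / k ! * |cos (j * θ)| ≤ (|l| * 1) ^ k / k ! * 1 := by
          gcongr <;> exact abs_cos_le_one _
      _ = |l| ^ k / k ! := by ring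
  have hsum := hasSum_intervalIntegral_of_summable_norm (a := 0) (b := π)
    ((summable_pow_div_factorial |l|).of_nonneg_of_le (fun _ => norm_nonneg _) hterm_norm)
  have hexp (θ : ℝ) : ∑' k, term k θ = exp (l * cos θ) * cos (j * θ) := by
    rw [exp_eq_exp_ℝ, ← (NormedSpace.expSeries_div_hasSum_exp (l * cos θ)).mul_right _ |>.tsum_eq]
    rfl
  simp only [hexp] at hsum
  have hterm_integral (k : ℕ) :
      (∫ θ in 0..π, term k θ) / π = l ^ k / k ! * (cosMoment k j / π) := by
    simp only [term, ContinuousMap.coe_mk, cosMoment, mul_pow, mul_div_right_comm _ _ (k ! : ℝ),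
      mul_assoc, integral_const_mul]
    ring
  rw [show besselI j l = (∫ θ in 0..π, exp (l * cos θ) * cos (j * θ)) / π by
    unfold besselI; ring]
  simpa only [hterm_integral] using hsum.div_const π

lemma besselI_nonneg {l : ℝ} (hl : 0 ≤ l) (j : ℕ) : 0 ≤ besselI j l :=
  (hasSum_besselI j l).nonneg fun k => by have := cosMoment_nonneg k j; positivity

lemma besselI_zero_add_two_mul_sum_le_exp {l : ℝ} (hl : 0 ≤ l) (n : ℕ) :
    besselI 0 l + 2 * ∑ j ∈ Finset.Icc 1 n, besselI j l ≤ exp l := by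
  have hsum : HasSum (fun k => l ^ k / k ! * (cosMomentSum k n / π))
      (besselI 0 l + 2 * ∑ j ∈ Finset.Icc 1 n, besselI j l) := by
    have hsum_tail := hasSum_sum (s := Finset.Icc 1 n) fun j _ => hasSum_besselI j l
    convert (hasSum_besselI 0 l).add (hsum_tail.mul_left 2) using 2 with k
    simp only [cosMomentSum, ← Finset.sum_div, ← Finset.mul_sum]
    ring
  refine hasSum_le (fun k => ?_) hsum (exp_eq_exp_ℝ ▸ NormedSpace.expSeries_div_hasSum_exp l)
  have : cosMomentSum k n / π ≤ 1 := (div_le_one pi_pos).mpr (cosMomentSum_le_pi k n)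
  calc l ^ k / k ! * (cosMomentSum k n / π) ≤ l ^ k / k ! * 1 := by gcongr
    _ = l ^ k / k ! := mul_one _

lemma abs_add_two_mul_sum_mul_le {a t : ℕ → ℝ} (s : Finset ℕ) (ha : ∀ j, 0 ≤ a j)
    (ht : ∀ j, |t j| ≤ 1) :
    |a 0 + 2 * ∑ j ∈ s, a j * t j| ≤ a 0 + 2 * ∑ j ∈ s, a j := by
  have hsum : |∑ j ∈ s, a j * t j| ≤ ∑ j ∈ s, a j :=
    (Finset.abs_sum_le_sum_abs _ s).trans <| Finset.sum_le_sum fun j _ => by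
      rw [abs_mul, abs_of_nonneg (ha j)]
      exact mul_le_of_le_one_right (ha j) (ht j)
  calc |a 0 + 2 * ∑ j ∈ s, a j * t j| ≤ |a 0| + 2 * |∑ j ∈ s, a j * t j| := by
        simpa only [abs_mul, abs_two] using abs_add_le (a 0) (2 * ∑ j ∈ s, a j * t j)
    _ ≤ a 0 + 2 * ∑ j ∈ s, a j := by rw [abs_of_nonneg (ha 0)]; gcongr

/-- The polynomial `p_{exp,λ,n}` is bounded by `1` in absolute value on `[-1,1]`. -/
theorem pExp_bound (l : ℝ) (hl : 0 < l) (n : ℕ) :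
    ∀ x ∈ Set.Icc (-1 : ℝ) 1, |pExp l n x| ≤ 1 := by
  intro x hx
  have hT (j : ℕ) : |(Polynomial.Chebyshev.T ℝ (j : ℤ)).eval (-x)| ≤ 1 :=
    Polynomial.Chebyshev.abs_eval_T_real_le_one j (by rwa [abs_neg, abs_le])
  calc |pExp l n x|
      ≤ exp (-l) * (besselI 0 l + 2 * ∑ j ∈ Finset.Icc 1 n, besselI j l) := by
        rw [pExp, abs_mul, abs_of_pos (exp_pos _)]
        gcongr
        exact abs_add_two_mul_sum_mul_le _ (fun j => besselI_nonneg hl.le j) hT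
    _ ≤ exp (-l) * exp l := by gcongr; exact besselI_zero_add_two_mul_sum_le_exp hl.le n
    _ = 1 := by rw [← exp_add, neg_add_cancel, exp_zero]
end

section
/- Let k > 0, ε > 0, t > 0, and let w > 0 satisfy w e^{w} = 2¹⁶ k² / (π t ε⁸). Let n be a real number with n ≥ 1 + 2√(t w). Then (4k/(√π n)) · 2 e^{−(n−1)²/(8t)} ≤ ε⁴ / 64. -/
/-!
Since `n - 1 ≥ 2√(tw)`, the Gaussian factor is at most `e^{-w/2}`, and `n ≥ 2√(tw)`.
The Lambert-W equation gives `e^{-w} = w / (w e^w) = πtwε⁸ / (2¹⁶k²)`, i.e.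
`e^{-w/2} = √π ε⁴ √(tw) / (256k)`, and with these two bounds the left-hand side
becomes exactly `ε⁴/64`.
-/

open Real

lemma exp_neg_eq_div_of_mul_exp_eq {w c : ℝ} (hw : w ≠ 0) (h : w * exp w = c) :
    exp (-w) = w / c := by
  rw [← h, exp_neg]
  field_simp

lemma neg_sq_div_le_neg_half {t w n : ℝ} (ht : 0 < t) (hw : 0 ≤ w)
    (hn : 1 + 2 * √(t * w) ≤ n) :
    -(n - 1) ^ 2 / (8 * t) ≤ -(w / 2) := by
  have hsq : 4 * (t * w) ≤ (n - 1) ^ 2 := by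
    have h2s : 2 * √(t * w) ≤ n - 1 := by linarith
    calc 4 * (t * w) = (2 * √(t * w)) ^ 2 := by
          rw [mul_pow, sq_sqrt (by positivity)]; ring
      _ ≤ (n - 1) ^ 2 := by gcongr
  rw [div_le_iff₀ (by positivity)]
  nlinarith

lemma exp_neg_half_eq_of_mul_exp_eq {k ε t w : ℝ} (hk : 0 < k) (ht : 0 < t) (hw : 0 < w)
    (hW : w * exp w = 2 ^ 16 * k ^ 2 / (π * t * ε ^ 8)) :
    exp (-(w / 2)) = ε ^ 4 / (256 * k) * √π * √(t * w) := by
  have hexp : exp (-w) = (ε ^ 4 / (256 * k)) ^ 2 * (π * (t * w)) := by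
    rw [exp_neg_eq_div_of_mul_exp_eq hw.ne' hW]
    field_simp
    ring
  rw [← neg_div, exp_half, hexp, sqrt_mul (sq_nonneg _), sqrt_sq (by positivity),
    sqrt_mul pi_pos.le, mul_assoc]

theorem erf_truncation_bound_general (k ε t w n : ℝ) (hk : 0 < k)
    (ht : 0 < t) (hw : 0 < w)
    (hW : w * Real.exp w = 2 ^ 16 * k ^ 2 / (Real.pi * t * ε ^ 8))
    (hn : 1 + 2 * Real.sqrt (t * w) ≤ n) :
    (4 * k / (Real.sqrt Real.pi * n)) * (2 * Real.exp (-(n - 1) ^ 2 / (8 * t))) ≤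
      ε ^ 4 / 64 := by
  have h2s : 2 * √(t * w) ≤ n := by linarith
  calc (4 * k / (√π * n)) * (2 * exp (-(n - 1) ^ 2 / (8 * t)))
      ≤ (4 * k / (√π * (2 * √(t * w)))) * (2 * exp (-(w / 2))) := by
        gcongr
        exact neg_sq_div_le_neg_half ht hw.le hn
    _ = ε ^ 4 / 64 := by
        rw [exp_neg_half_eq_of_mul_exp_eq hk ht hw hW]
        field_simp
        ring

/-- With `w = W(2¹⁶k²/(πtε⁸))` (Lambert-W) and `n ≥ 1 + 2√(tw)`, the truncation term
of the error-function approximation satisfies `(4k/(√π n))·2e^{−(n−1)²/(8t)} ≤ ε⁴/64`. -/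
theorem erf_truncation_bound (k ε t w n : ℝ) (hk : 0 < k) (hε : 0 < ε)
    (ht : 0 < t) (hw : 0 < w)
    (hW : w * Real.exp w = 2 ^ 16 * k ^ 2 / (Real.pi * t * ε ^ 8))
    (hn : 1 + 2 * Real.sqrt (t * w) ≤ n) :
    (4 * k / (Real.sqrt Real.pi * n)) * (2 * Real.exp (-(n - 1) ^ 2 / (8 * t))) ≤
      ε ^ 4 / 64 :=
  erf_truncation_bound_general k ε t w n hk ht hw hW hn
end
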